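/- Suppose every runtime RW edge (T_i, T_j) whose template pair forms a static vulnerable dependency is scheduled so that commit(T_i) < commit(T_j), and every other edge already satisfies commit order. Then the runtime dependency graph is acyclic. -/
import Mathlib


inductive Lbl | WW | WR | RW
deriving DecidableEq

/-- Suppose every runtime RW edge (Tᵢ,Tⱼ) whose template pair forms a static
vulnerable dependency (i.e., a static RW edge) is scheduled with
commit(Tᵢ) < commit(Tⱼ), and every other (WW/WR) runtime edge already
satisfies commit order. Runtime edges map label-preservingly to static edges.
Then the runtime dependency graph is acyclic. -/
theorem stmt_7 {Tmpl V : Type*}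
    (S : Tmpl → Tmpl → Lbl → Prop)
    (tmpl : V → Tmpl) (E : V → V → Lbl → Prop)
    (hhom : ∀ i j l, E i j l → S (tmpl i) (tmpl j) l)
    (commit : V → ℝ)
    (hVul : ∀ i j, E i j Lbl.RW → S (tmpl i) (tmpl j) Lbl.RW →
      commit i < commit j)
    (hOther : ∀ i j l, E i j l → l ≠ Lbl.RW → commit i < commit j) :
    ∀ (n : ℕ), 0 < n → ∀ (f : ZMod n → V) (lbl : ZMod n → Lbl),
      (∀ i : ZMod n, E (f i) (f (i + 1)) (lbl i)) → False := by
  intro n hn f lbl hE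
  have step : ∀ i : ZMod n, commit (f i) < commit (f (i + 1)) := by
    intro i
    by_cases h : lbl i = Lbl.RW
    · exact hVul _ _ (h ▸ hE i) (hhom _ _ _ (h ▸ hE i))
    · exact hOther _ _ _ (hE i) h
  have key : ∀ k : ℕ, commit (f 0) < commit (f (k + 1 : ℕ)) := by
    intro k
    induction k with
    | zero => simpa using step 0
    | succ m ih =>
        refine ih.trans ?_
        have := step ((m + 1 : ℕ) : ZMod n)
        simpa [add_comm, add_assoc] using this
  have hkey := key (n - 1)
  have hcast : ((n - 1 + 1 : ℕ) : ZMod n) = 0 := by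
    rw [Nat.sub_add_cancel hn]
    exact ZMod.natCast_self n
  rw [hcast] at hkey
  exact lt_irrefl _ hkey
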